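/- Fix γ > 0 and conjugate exponents p, q > 1 with 1/p + 1/q = 1. Let (x,v) be a solution of the leader-based system ẋ_i = v_i, v̇_i = (1/N) Σ_{j=1}^N a(‖x_i − x_j‖)(v_j − v_i) + γ(v̄_i(t) − v_i(t)), where each agent computes the local average v̄_i(t) = (1/p) v_i(t) + (1/q) v_1(t). Then the functional V(t) = B(v(t),v(t)) satisfies d/dt V(t) ≤ −(2γ/q) V(t) for all t ≥ 0; hence V(t) ≤ V(0) e^{−2γ t/q}, and the system tends to consensus for every q > 0. -/

import Mathlib

open scoped BigOperators InnerProductSpace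
open MeasureTheory Filter

/-- The symmetric bilinear form `B(v,w) = (1/(2N²)) ∑ᵢ∑ⱼ (vᵢ-vⱼ)·(wᵢ-wⱼ)`. -/
noncomputable def bform {d N : ℕ} (v w : Fin N → EuclideanSpace ℝ (Fin d)) : ℝ :=
  (2 * (N : ℝ) ^ 2)⁻¹ * ∑ i, ∑ j, ⟪v i - v j, w i - w j⟫_ℝ

/-- The mean of `N` vectors. -/
noncomputable def meanVec {d N : ℕ} (v : Fin N → EuclideanSpace ℝ (Fin d)) :
    EuclideanSpace ℝ (Fin d) :=
  (N : ℝ)⁻¹ • ∑ i, v i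

/-!
By the identity `B(v, w) = (1/N) ∑ᵢ ⟪vᵢ, wᵢ⟫ - ⟪v̄, w̄⟫`, the form `B(v, ·)` kills constant
families and `B(v, Lv) ≤ 0` for the graph Laplacian `(Lv)ᵢ = ∑ⱼ aᵢⱼ (vⱼ - vᵢ)` of any symmetric
nonnegative weights: `∑ᵢ Lvᵢ = 0`, and symmetrizing gives `∑ᵢ ⟪vᵢ, Lvᵢ⟫ = -½ ∑ aᵢⱼ ‖vᵢ - vⱼ‖²`.
Since `1/p = 1 - 1/q`, the feedback term is `-(γ/q) vᵢ` plus the constant `(γ/q) v₁`, so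
`V' = 2 B(v, v̇) ≤ -(2γ/q) V`. Grönwall's inequality gives the exponential decay, and
`‖vᵢ - v̄‖² ≤ N V` turns it into consensus.
-/

section Alignment

variable {ι E : Type*} [Fintype ι] [NormedAddCommGroup E] [InnerProductSpace ℝ E]
  {A : ι → ι → ℝ}

theorem sum_sum_smul_sub_eq_zero (hA : ∀ i j, A i j = A j i) (v : ι → E) :
    ∑ i, ∑ j, A i j • (v j - v i) = 0 := by
  have hswap : ∑ i, ∑ j, A i j • v j = ∑ i, ∑ j, A i j • v i := by
    rw [Finset.sum_comm]; simp_rw [hA]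
  simp_rw [smul_sub, Finset.sum_sub_distrib, hswap, sub_self]

theorem sum_sum_mul_inner_sub_nonpos (hA : ∀ i j, A i j = A j i) (hA₀ : ∀ i j, 0 ≤ A i j)
    (v : ι → E) : ∑ i, ∑ j, A i j * ⟪v i, v j - v i⟫_ℝ ≤ 0 := by
  have hswap : ∑ i, ∑ j, A i j * ⟪v i, v j - v i⟫_ℝ = ∑ i, ∑ j, A i j * ⟪v j, v i - v j⟫_ℝ := by
    rw [Finset.sum_comm]; simp_rw [hA]
  have hsym : 2 * ∑ i, ∑ j, A i j * ⟪v i, v j - v i⟫_ℝ = -∑ i, ∑ j, A i j * ‖v i - v j‖ ^ 2 := by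
    rw [two_mul]; nth_rw 2 [hswap]
    simp_rw [← Finset.sum_add_distrib, ← Finset.sum_neg_distrib, ← mul_add, ← mul_neg,
      ← real_inner_self_eq_norm_sq]
    congr! 3 with i - j -
    rw [inner_sub_left, inner_sub_right, inner_sub_right, inner_sub_right, real_inner_comm (v j)]
    ring
  have : 0 ≤ ∑ i, ∑ j, A i j * ‖v i - v j‖ ^ 2 :=
    Finset.sum_nonneg fun i _ => Finset.sum_nonneg fun j _ => mul_nonneg (hA₀ i j) (sq_nonneg _)
  linarith

end Alignment

theorem le_mul_exp_of_hasDerivAt_le_neg_mul {f : ℝ → ℝ} {c : ℝ}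
    (hf : ∀ t, 0 ≤ t → ∃ f' : ℝ, HasDerivAt f f' t ∧ f' ≤ -c * f t) {t : ℝ} (ht : 0 ≤ t) :
    f t ≤ f 0 * Real.exp (-c * t) := by
  choose! f' hderiv hbound using hf
  have := le_gronwallBound_of_liminf_deriv_right_le (δ := f 0) (K := -c) (ε := 0) (b := t)
    (fun s hs => (hderiv s hs.1).continuousAt.continuousWithinAt)
    (fun s hs r hr => (hderiv s hs.1).hasDerivWithinAt.liminf_right_slope_le hr)
    le_rfl (fun s hs => by simpa using hbound s hs.1) t ⟨ht, le_rfl⟩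
  simpa [gronwallBound_ε0] using this

section BForm

variable {d N : ℕ}

theorem bform_eq_sub_inner_meanVec (v w : Fin N → EuclideanSpace ℝ (Fin d)) :
    bform v w = (N : ℝ)⁻¹ * ∑ i, ⟪v i, w i⟫_ℝ - ⟪meanVec v, meanVec w⟫_ℝ := by
  have hexpand : ∑ i, ∑ j, ⟪v i - v j, w i - w j⟫_ℝ
      = 2 * N * ∑ i, ⟪v i, w i⟫_ℝ - 2 * ⟪∑ i, v i, ∑ i, w i⟫_ℝ := by
    simp only [inner_sub_left, inner_sub_right, Finset.sum_sub_distrib, sum_inner, inner_sum,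
      Finset.sum_const, Finset.card_univ, Fintype.card_fin, nsmul_eq_mul, ← Finset.mul_sum]
    rw [Finset.sum_comm (f := fun i j => ⟪v j, w i⟫_ℝ)]
    ring
  rcases N.eq_zero_or_pos with rfl | hN
  · simp [bform, meanVec]
  · have : (N : ℝ) ≠ 0 := by positivity
    rw [bform, meanVec, meanVec, hexpand, real_inner_smul_left, real_inner_smul_right]
    field_simp

theorem bform_add_right (v w w' : Fin N → EuclideanSpace ℝ (Fin d)) :
    bform v (w + w') = bform v w + bform v w' := by
  simp only [bform, Pi.add_apply, add_sub_add_comm, inner_add_right, Finset.sum_add_distrib,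
    mul_add]

theorem bform_smul_right (c : ℝ) (v w : Fin N → EuclideanSpace ℝ (Fin d)) :
    bform v (c • w) = c * bform v w := by
  simp only [bform, Pi.smul_apply, ← smul_sub, real_inner_smul_right, ← Finset.mul_sum]
  ring

theorem bform_const_right (v : Fin N → EuclideanSpace ℝ (Fin d)) (l : EuclideanSpace ℝ (Fin d)) :
    bform v (fun _ => l) = 0 := by
  simp [bform]

theorem bform_self_eq_sum_norm_sub_meanVec_sq (v : Fin N → EuclideanSpace ℝ (Fin d)) :
    bform v v = (N : ℝ)⁻¹ * ∑ i, ‖v i - meanVec v‖ ^ 2 := by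
  rcases N.eq_zero_or_pos with rfl | hN
  · simp [bform]
  set u : Fin N → EuclideanSpace ℝ (Fin d) := fun i => v i - meanVec v
  have hmean : meanVec u = 0 := by
    have : (N : ℝ) ≠ 0 := by positivity
    simp only [u, meanVec, Finset.sum_sub_distrib, Finset.sum_const, Finset.card_univ,
      Fintype.card_fin, smul_sub, ← Nat.cast_smul_eq_nsmul ℝ, smul_smul, mul_inv_cancel₀ this,
      mul_one, sub_self]
  have htranslate : bform v v = bform u u := by
    simp only [bform, u, sub_sub_sub_cancel_right]
  simp [htranslate, bform_eq_sub_inner_meanVec, hmean, u]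

theorem bform_self_nonneg (v : Fin N → EuclideanSpace ℝ (Fin d)) : 0 ≤ bform v v := by
  rw [bform_self_eq_sum_norm_sub_meanVec_sq]
  positivity

theorem norm_sub_meanVec_sq_le (v : Fin N → EuclideanSpace ℝ (Fin d)) (i : Fin N) :
    ‖v i - meanVec v‖ ^ 2 ≤ N * bform v v := by
  have : (N : ℝ) ≠ 0 := by have := i.pos; positivity
  rw [bform_self_eq_sum_norm_sub_meanVec_sq, ← mul_assoc, mul_inv_cancel₀ this, one_mul]
  exact Finset.single_le_sum (fun j _ => sq_nonneg ‖v j - meanVec v‖) (Finset.mem_univ i)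

theorem bform_alignment_nonpos {A : Fin N → Fin N → ℝ} (hA : ∀ i j, A i j = A j i)
    (hA₀ : ∀ i j, 0 ≤ A i j) (v : Fin N → EuclideanSpace ℝ (Fin d)) :
    bform v (fun i => ∑ j, A i j • (v j - v i)) ≤ 0 := by
  have hmean : meanVec (fun i => ∑ j, A i j • (v j - v i)) = 0 := by
    rw [meanVec, sum_sum_smul_sub_eq_zero hA, smul_zero]
  rw [bform_eq_sub_inner_meanVec, hmean, inner_zero_right, sub_zero]
  simp only [inner_sum, real_inner_smul_right]
  exact mul_nonpos_of_nonneg_of_nonpos (by positivity) (sum_sum_mul_inner_sub_nonpos hA hA₀ v)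

theorem hasDerivAt_bform_self {v : ℝ → Fin N → EuclideanSpace ℝ (Fin d)}
    {v' : Fin N → EuclideanSpace ℝ (Fin d)} {t : ℝ}
    (hv : ∀ i, HasDerivAt (fun s => v s i) (v' i) t) :
    HasDerivAt (fun s => bform (v s) (v s)) (2 * bform (v t) v') t := by
  have hpair : ∀ i j, HasDerivAt (fun s => ⟪v s i - v s j, v s i - v s j⟫_ℝ)
      (2 * ⟪v t i - v t j, v' i - v' j⟫_ℝ) t := fun i j => by
    have hdiff := (hv i).fun_sub (hv j)
    have h := hdiff.inner ℝ hdiff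
    rwa [real_inner_comm (v t i - v t j) (v' i - v' j), ← two_mul] at h
  have hV : HasDerivAt (fun s => bform (v s) (v s))
      ((2 * (N : ℝ) ^ 2)⁻¹ * ∑ i, ∑ j, 2 * ⟪v t i - v t j, v' i - v' j⟫_ℝ) t :=
    (HasDerivAt.fun_sum fun i _ => HasDerivAt.fun_sum fun j _ => hpair i j).const_mul _
  convert hV using 1
  simp only [bform, ← Finset.mul_sum]
  ring

theorem bform_leaderFeedback_le {A : Fin N → Fin N → ℝ} (hA : ∀ i j, A i j = A j i)
    (hA₀ : ∀ i j, 0 ≤ A i j) {γ p q : ℝ} (hpq : 1 / p + 1 / q = 1)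
    (v : Fin N → EuclideanSpace ℝ (Fin d)) (l : EuclideanSpace ℝ (Fin d)) :
    bform v (fun i => (N : ℝ)⁻¹ • ∑ j, A i j • (v j - v i)
        + γ • (((1 / p) • v i + (1 / q) • l) - v i)) ≤ -(γ / q) * bform v v := by
  have hsplit : (fun i => (N : ℝ)⁻¹ • ∑ j, A i j • (v j - v i)
        + γ • (((1 / p) • v i + (1 / q) • l) - v i))
      = (N : ℝ)⁻¹ • (fun i => ∑ j, A i j • (v j - v i)) + (-(γ / q)) • v
        + fun _ => (γ / q) • l := by
    have h1p : 1 / p = 1 - 1 / q := by linarith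
    funext i
    simp only [Pi.add_apply, Pi.smul_apply, h1p]
    module
  rw [hsplit, bform_add_right, bform_add_right, bform_smul_right, bform_smul_right,
    bform_const_right]
  have := mul_nonpos_of_nonneg_of_nonpos (by positivity : (0 : ℝ) ≤ (N : ℝ)⁻¹)
    (bform_alignment_nonpos hA hA₀ v)
  linarith

theorem tendsto_norm_sub_meanVec_of_tendsto_bform {α : Type*} {l : Filter α}
    {v : α → Fin N → EuclideanSpace ℝ (Fin d)}
    (hv : Tendsto (fun t => bform (v t) (v t)) l (nhds 0)) (i : Fin N) :
    Tendsto (fun t => ‖v t i - meanVec (v t)‖) l (nhds 0) := by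
  have hbound : Tendsto (fun t => Real.sqrt (N * bform (v t) (v t))) l (nhds 0) := by
    simpa using (hv.const_mul (N : ℝ)).sqrt
  refine squeeze_zero (fun t => norm_nonneg _) (fun t => ?_) hbound
  exact Real.le_sqrt_of_sq_le (norm_sub_meanVec_sq_le (v t) i)

end BForm

theorem leaderFeedback_consensus_general
    {d N : ℕ} (hN : 0 < N)
    (a : ℝ → ℝ)
    (ha_pos : ∀ r, 0 ≤ r → 0 < a r)
    (γ : ℝ) (hγ : 0 < γ)
    (p q : ℝ) (hq : 1 < q) (hpq : 1 / p + 1 / q = 1)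
    (x v : ℝ → Fin N → EuclideanSpace ℝ (Fin d))
    (hv : ∀ (i : Fin N), ∀ t, 0 ≤ t → HasDerivAt (fun s => v s i)
      ((N : ℝ)⁻¹ • ∑ j, a ‖x t i - x t j‖ • (v t j - v t i)
        + γ • (((1 / p) • v t i + (1 / q) • v t ⟨0, hN⟩) - v t i)) t) :
    (∀ t, 0 ≤ t → ∃ V' : ℝ, HasDerivAt (fun s => bform (v s) (v s)) V' t ∧
      V' ≤ -(2 * γ / q) * bform (v t) (v t)) ∧
    (∀ t, 0 ≤ t → bform (v t) (v t) ≤ bform (v 0) (v 0) * Real.exp (-(2 * γ / q) * t)) ∧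
    ∀ i, Tendsto (fun t => ‖v t i - meanVec (v t)‖) atTop (nhds 0) := by
  have hdiss : ∀ t, 0 ≤ t → ∃ V' : ℝ, HasDerivAt (fun s => bform (v s) (v s)) V' t ∧
      V' ≤ -(2 * γ / q) * bform (v t) (v t) := fun t ht => by
    refine ⟨_, hasDerivAt_bform_self (hv · t ht), ?_⟩
    have := bform_leaderFeedback_le (fun i j => by rw [norm_sub_rev])
      (fun i j => (ha_pos _ (norm_nonneg (x t i - x t j))).le) hpq (γ := γ) (v t) (v t ⟨0, hN⟩)
    exact (mul_le_mul_of_nonneg_left this zero_le_two).trans_eq (by ring)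
  have hdecay := fun t (ht : 0 ≤ t) => le_mul_exp_of_hasDerivAt_le_neg_mul hdiss ht
  refine ⟨hdiss, hdecay, tendsto_norm_sub_meanVec_of_tendsto_bform ?_⟩
  have hrate : 0 < 2 * γ / q := by positivity
  have hexp :
      Tendsto (fun t => bform (v 0) (v 0) * Real.exp (-(2 * γ / q) * t)) atTop (nhds 0) := by
    simpa using (Real.tendsto_exp_atBot.comp
      (tendsto_id.const_mul_atTop_of_neg (neg_neg_of_pos hrate))).const_mul (bform (v 0) (v 0))
  exact squeeze_zero' (Eventually.of_forall fun t => bform_self_nonneg (v t))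
    ((eventually_ge_atTop 0).mono hdecay) hexp

/-- Leader-based feedback: if every agent uses the local average
`v̄ᵢ = (1/p)vᵢ + (1/q)v₁`, then `dV/dt ≤ -(2γ/q)V`, hence `V(t) ≤ V(0)e^{-2γt/q}`
and the system tends to consensus for every `q`. -/
theorem leaderFeedback_consensus
    {d N : ℕ} (hN : 0 < N)
    (a : ℝ → ℝ)
    (ha_pos : ∀ r, 0 ≤ r → 0 < a r)
    (ha_mono : ∀ r s, 0 ≤ r → r ≤ s → a s ≤ a r)
    (ha_bdd : ∃ C, ∀ r, 0 ≤ r → a r ≤ C)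
    (ha_lip : ∃ K : NNReal, LipschitzWith K a)
    (γ : ℝ) (hγ : 0 < γ)
    (p q : ℝ) (hp : 1 < p) (hq : 1 < q) (hpq : 1 / p + 1 / q = 1)
    (x v : ℝ → Fin N → EuclideanSpace ℝ (Fin d))
    (hx : ∀ (i : Fin N), ∀ t, 0 ≤ t → HasDerivAt (fun s => x s i) (v t i) t)
    (hv : ∀ (i : Fin N), ∀ t, 0 ≤ t → HasDerivAt (fun s => v s i)
      ((N : ℝ)⁻¹ • ∑ j, a ‖x t i - x t j‖ • (v t j - v t i)
        + γ • (((1 / p) • v t i + (1 / q) • v t ⟨0, hN⟩) - v t i)) t) :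
    (∀ t, 0 ≤ t → ∃ V' : ℝ, HasDerivAt (fun s => bform (v s) (v s)) V' t ∧
      V' ≤ -(2 * γ / q) * bform (v t) (v t)) ∧
    (∀ t, 0 ≤ t → bform (v t) (v t) ≤ bform (v 0) (v 0) * Real.exp (-(2 * γ / q) * t)) ∧
    ∀ i, Tendsto (fun t => ‖v t i - meanVec (v t)‖) atTop (nhds 0) :=
  leaderFeedback_consensus_general hN a ha_pos γ hγ p q hq hpq x v hv
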